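/- If YB_r is identically zero (i.e. r is a triangular r-matrix, satisfying the classical Yang–Baxter equation [r,r]_μ = 0), then [·,·]_r is a Lie algebra bracket on g*, and r : (g*, [·,·]_r) → (g, [·,·]) is a morphism of Lie algebras: r([ξ,η]_r) = [rξ, rη] for all ξ, η ∈ g*. -/
import Mathlib


/-! A triangular r-matrix yields a Lie bracket on `g*` and `r` is a morphism of Lie algebras. -/

section RMatrix

variable {K : Type*} [Field K] [CharZero K] {g : Type*} [LieRing g] [LieAlgebra K g]

/-- Coadjoint action: `(coad x ξ) y = −ξ ⁅x, y⁆`. -/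
def coad (x : g) (ξ : Module.Dual K g) : Module.Dual K g :=
  - (ξ ∘ₗ (LieAlgebra.ad K g x : g →ₗ[K] g))

/-- The bracket `[ξ,η]_r = ad*_{rξ} η − ad*_{rη} ξ` on `g*`. -/
def coBr (r : Module.Dual K g →ₗ[K] g) (ξ η : Module.Dual K g) : Module.Dual K g :=
  coad (r ξ) η - coad (r η) ξ

/-- The alternating trilinear form
`YB_r(ξ,η,ζ) = ζ⁅rξ,rη⁆ + ξ⁅rη,rζ⁆ + η⁅rζ,rξ⁆` on `g*`. -/
def YB (r : Module.Dual K g →ₗ[K] g) (ξ η ζ : Module.Dual K g) : K :=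
  ζ ⁅r ξ, r η⁆ + ξ ⁅r η, r ζ⁆ + η ⁅r ζ, r ξ⁆


/-- **Triangular case**: if `YB_r ≡ 0` (`r` satisfies the classical Yang–Baxter
equation `[r,r]_μ = 0`), then `[·,·]_r` is a Lie algebra bracket on `g*`
(it is skew-symmetric by construction, and here it satisfies the Jacobi
identity), and `r : (g*, [·,·]_r) → (g, ⁅·,·⁆)` is a morphism of Lie algebras. -/
theorem triangular_r_matrix_lie_bracket_and_morphism
    (r : Module.Dual K g →ₗ[K] g)
    (hskew : ∀ ξ η : Module.Dual K g, η (r ξ) = - ξ (r η))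
    (hYB : ∀ ξ η ζ : Module.Dual K g, YB r ξ η ζ = 0) :
    (∀ ξ η ζ : Module.Dual K g,
      coBr r (coBr r ξ η) ζ + coBr r (coBr r η ζ) ξ + coBr r (coBr r ζ ξ) η = 0) ∧
    (∀ ξ η : Module.Dual K g, r (coBr r ξ η) = ⁅r ξ, r η⁆) := by
  have hc : ∀ (α β : Module.Dual K g) (y : g),
      (coBr r α β) y = α ⁅r β, y⁆ - β ⁅r α, y⁆ := by
    intro α β y
    simp only [coBr, coad, LinearMap.sub_apply, LinearMap.neg_apply, LinearMap.comp_apply,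
      LieAlgebra.ad_apply]
    ring
  have hmor : ∀ ξ η : Module.Dual K g, r (coBr r ξ η) = ⁅r ξ, r η⁆ := by
    intro ξ η
    rw [← sub_eq_zero, ← Module.forall_dual_apply_eq_zero_iff K]
    intro ζ
    rw [map_sub, hskew (coBr r ξ η) ζ, hc]
    have h2 := hYB ξ η ζ
    simp only [YB] at h2
    have h3 : η ⁅r ζ, r ξ⁆ = - η ⁅r ξ, r ζ⁆ := by
      rw [← lie_skew (r ξ) (r ζ), map_neg, neg_neg]
    linear_combination -h2 + h3
  refine ⟨?_, hmor⟩
  intro ξ η ζ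
  ext y
  have j1 := congrArg ζ (lie_lie (r ξ) (r η) y)
  have j2 := congrArg ξ (lie_lie (r η) (r ζ) y)
  have j3 := congrArg η (lie_lie (r ζ) (r ξ) y)
  simp only [map_sub] at j1 j2 j3
  simp only [LinearMap.add_apply, LinearMap.zero_apply, hc, hmor]
  linear_combination -j1 - j2 - j3
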